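/- arXiv:2111.07606 — 3 statements merged into one kernel-verified Lean document; each statement's English description precedes it below -/
import Mathlib

section
/- Let p and q be probability density functions on a measurable space with q > 0 wherever p > 0, and let γ > 0. For any measurable positive function D, define J_γ(D) = γ·∫ p(x) log D(x) dx − ∫ q(x) D(x)^γ dx. Then D_KL(p‖q) ≥ J_γ(D) + 1 for every such D (assuming all integrals are finite). -/
open MeasureTheory

/-!
Pointwise, `a log t - b t` is maximised over `t > 0` at `t = a / b`, which gives
`a - b t ≤ a log (a / b) - a log t` (a rearrangement of `log x ≥ 1 - 1 / x`).
Taking `a = p x`, `b = q x`, `t = D x ^ γ` and integrating, with `∫ p = 1`, yields the bound.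
-/

namespace Real

lemma sub_mul_le_mul_log_div_sub_mul_log {a b t : ℝ} (ha : 0 ≤ a) (hb : 0 ≤ b)
    (hab : 0 < a → 0 < b) (ht : 0 < t) :
    a - b * t ≤ a * log (a / b) - a * log t := by
  rcases ha.eq_or_lt with rfl | ha
  · simpa using mul_nonneg hb ht.le
  have hb := hab ha
  calc a - b * t = a * (1 - (a / b / t)⁻¹) := by field_simp
    _ ≤ a * log (a / b / t) := by gcongr; exact one_sub_inv_le_log_of_pos (by positivity)
    _ = a * log (a / b) - a * log t := by rw [log_div (by positivity) ht.ne']; ring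

end Real

theorem gammaDIME_lower_bound_general {X : Type*} [MeasurableSpace X] (μ : Measure X)
    (p q D : X → ℝ) (γ : ℝ)
    (hp : ∀ x, 0 ≤ p x) (hq : ∀ x, 0 ≤ q x)
    (hpq : ∀ x, 0 < p x → 0 < q x)
    (hp1 : ∫ x, p x ∂μ = 1)
    (hD : ∀ x, 0 < D x)
    (hint1 : Integrable (fun x => p x * Real.log (p x / q x)) μ)
    (hint2 : Integrable (fun x => p x * Real.log (D x)) μ)
    (hint3 : Integrable (fun x => q x * D x ^ γ) μ) :
    γ * (∫ x, p x * Real.log (D x) ∂μ) - (∫ x, q x * D x ^ γ ∂μ) + 1 ≤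
      ∫ x, p x * Real.log (p x / q x) ∂μ := by
  have hp_int : Integrable p μ := .of_integral_ne_zero (by simp [hp1])
  have pointwise (x : X) :
      p x - q x * D x ^ γ ≤ p x * Real.log (p x / q x) - γ * (p x * Real.log (D x)) := by
    have h := Real.sub_mul_le_mul_log_div_sub_mul_log (hp x) (hq x) (hpq x)
      (Real.rpow_pos_of_pos (hD x) γ)
    rwa [Real.log_rpow (hD x), mul_left_comm] at h
  calc γ * (∫ x, p x * Real.log (D x) ∂μ) - (∫ x, q x * D x ^ γ ∂μ) + 1
      = (∫ x, p x - q x * D x ^ γ ∂μ) + γ * ∫ x, p x * Real.log (D x) ∂μ := by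
        rw [integral_sub hp_int hint3, hp1]; ring
    _ ≤ (∫ x, p x * Real.log (p x / q x) - γ * (p x * Real.log (D x)) ∂μ)
          + γ * ∫ x, p x * Real.log (D x) ∂μ :=
        add_le_add_left
          (integral_mono (hp_int.sub hint3) (hint1.sub (hint2.const_mul γ)) pointwise) _
    _ = ∫ x, p x * Real.log (p x / q x) ∂μ := by
        rw [integral_sub hint1 (hint2.const_mul γ), integral_const_mul]; ring

/-- γ-DIME variational lower bound on the KL divergence (Lemma 1):
for probability densities `p, q` with `q > 0` wherever `p > 0`, `γ > 0`, and any
measurable positive `D` with finite integrals,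
`D_KL(p‖q) ≥ γ ∫ p log D - ∫ q D^γ + 1`. -/
theorem gammaDIME_lower_bound {X : Type*} [MeasurableSpace X] (μ : Measure X)
    (p q D : X → ℝ) (γ : ℝ) (hγ : 0 < γ)
    (hmp : Measurable p) (hmq : Measurable q) (hmD : Measurable D)
    (hp : ∀ x, 0 ≤ p x) (hq : ∀ x, 0 ≤ q x)
    (hpq : ∀ x, 0 < p x → 0 < q x)
    (hp1 : ∫ x, p x ∂μ = 1) (hq1 : ∫ x, q x ∂μ = 1)
    (hD : ∀ x, 0 < D x)
    (hint1 : Integrable (fun x => p x * Real.log (p x / q x)) μ)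
    (hint2 : Integrable (fun x => p x * Real.log (D x)) μ)
    (hint3 : Integrable (fun x => q x * D x ^ γ) μ) :
    γ * (∫ x, p x * Real.log (D x) ∂μ) - (∫ x, q x * D x ^ γ ∂μ) + 1 ≤
      ∫ x, p x * Real.log (p x / q x) ∂μ :=
  gammaDIME_lower_bound_general μ p q D γ hp hq hpq hp1 hD hint1 hint2 hint3
end

section
/- Let p and q be probability densities with q > 0 wherever p > 0, and γ > 0. The function D*(x) = (p(x)/q(x))^{1/γ} achieves equality in the γ-DIME bound: J_γ(D*) + 1 = D_KL(p‖q), where J_γ(D) = γ·∫ p log D − ∫ q D^γ. -/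
open MeasureTheory

namespace Real

/-- Unlike `Real.log_rpow`, this also holds at `x = 0`, where both sides vanish
because `log 0 = 0` and `0 ^ y ∈ {0, 1}`. -/
theorem log_rpow_of_nonneg {x : ℝ} (hx : 0 ≤ x) (y : ℝ) : log (x ^ y) = y * log x := by
  rcases hx.eq_or_lt with rfl | hx
  · rcases eq_or_ne y 0 with rfl | hy <;> simp [zero_rpow, *]
  · exact log_rpow hx y

theorem mul_log_div_rpow {a b : ℝ} (ha : 0 ≤ a) (hb : 0 ≤ b) (r : ℝ) :
    a * log ((a / b) ^ r) = r * (a * log (a / b)) := by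
  rw [log_rpow_of_nonneg (div_nonneg ha hb)]
  ring

theorem mul_div_rpow_one_div_rpow {a b γ : ℝ} (hγ : γ ≠ 0) (ha : 0 ≤ a) (hb : 0 ≤ b)
    (hab : 0 < a → 0 < b) : b * ((a / b) ^ (1 / γ)) ^ γ = a := by
  rw [one_div, rpow_inv_rpow (div_nonneg ha hb) hγ]
  rcases hb.eq_or_lt with rfl | hb
  · simpa [ha.lt_iff_ne', eq_comm] using hab
  · exact mul_div_cancel₀ a hb.ne'

end Real

theorem gammaDIME_optimal_discriminator_general {X : Type*} [MeasurableSpace X] (μ : Measure X)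
    (p q : X → ℝ) (γ : ℝ) (hγ : 0 < γ)
    (hp : ∀ x, 0 ≤ p x) (hq : ∀ x, 0 ≤ q x)
    (hpq : ∀ x, 0 < p x → 0 < q x)
    (hp1 : ∫ x, p x ∂μ = 1) :
    γ * (∫ x, p x * Real.log ((p x / q x) ^ (1 / γ)) ∂μ) -
        (∫ x, q x * ((p x / q x) ^ (1 / γ)) ^ γ ∂μ) + 1 =
      ∫ x, p x * Real.log (p x / q x) ∂μ := by
  have hlog : ∫ x, p x * Real.log ((p x / q x) ^ (1 / γ)) ∂μ =
      1 / γ * ∫ x, p x * Real.log (p x / q x) ∂μ := by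
    simp_rw [Real.mul_log_div_rpow (hp _) (hq _)]
    exact integral_const_mul _ _
  have hmass : ∫ x, q x * ((p x / q x) ^ (1 / γ)) ^ γ ∂μ = 1 := by
    simp_rw [Real.mul_div_rpow_one_div_rpow hγ.ne' (hp _) (hq _) (hpq _)]
    exact hp1
  rw [hlog, hmass]
  field_simp
  ring

/-- The discriminator `D*(x) = (p x / q x) ^ (1/γ)` achieves equality in the γ-DIME
bound: `J_γ(D*) + 1 = D_KL(p‖q)`. -/
theorem gammaDIME_optimal_discriminator {X : Type*} [MeasurableSpace X] (μ : Measure X)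
    (p q : X → ℝ) (γ : ℝ) (hγ : 0 < γ)
    (hmp : Measurable p) (hmq : Measurable q)
    (hp : ∀ x, 0 ≤ p x) (hq : ∀ x, 0 ≤ q x)
    (hpq : ∀ x, 0 < p x → 0 < q x)
    (hp1 : ∫ x, p x ∂μ = 1) (hq1 : ∫ x, q x ∂μ = 1)
    (hint1 : Integrable (fun x => p x * Real.log (p x / q x)) μ)
    (hint2 : Integrable (fun x => p x * Real.log ((p x / q x) ^ (1 / γ))) μ)
    (hint3 : Integrable (fun x => q x * ((p x / q x) ^ (1 / γ)) ^ γ) μ) :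
    γ * (∫ x, p x * Real.log ((p x / q x) ^ (1 / γ)) ∂μ) -
        (∫ x, q x * ((p x / q x) ^ (1 / γ)) ^ γ ∂μ) + 1 =
      ∫ x, p x * Real.log (p x / q x) ∂μ :=
  gammaDIME_optimal_discriminator_general μ p q γ hγ hp hq hpq hp1
end

section
/- Let p and q be probability densities with q > 0 wherever p > 0, and α > 0. For any measurable positive function D with finite integrals, define J_α(D) = α·∫ p(x) log D(x) dx − ∫ q(x) D(x) dx. Then D_KL(p‖q) ≥ J_α(D)/α + 1 − log α, with equality for D*(x) = α·p(x)/q(x). -/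
/-!
For each `x`, the concave function `t ↦ p x * log t - q x * t / α` is maximised at
`t = α * p x / q x`, by `log s ≤ s - 1` applied to the ratio of `t` to that point; its maximum is
`p x * (log α + log (p x / q x) - 1)`. Integrating against `μ` and using `∫ p = 1` gives the
bound, and the maximiser `D*` attains it.
-/

open MeasureTheory Real

theorem mul_log_sub_mul_le {a b y : ℝ} (ha : 0 ≤ a) (hb : 0 ≤ b) (hab : 0 < a → 0 < b)
    (hy : 0 < y) : a * log y - b * y ≤ a * log (a / b) - a := by
  rcases ha.eq_or_lt with rfl | ha
  · simpa using mul_nonneg hb hy.le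
  have hb_pos := hab ha
  have hlog : log (b * y / a) ≤ b * y / a - 1 := log_le_sub_one_of_pos (by positivity)
  rw [log_div (by positivity) ha.ne', log_mul hb_pos.ne' hy.ne'] at hlog
  rw [log_div ha.ne' hb_pos.ne']
  have := mul_le_mul_of_nonneg_left hlog ha.le
  rw [mul_sub a (b * y / a), mul_div_cancel₀ _ ha.ne'] at this
  linarith

theorem mul_log_mul_div_eq {α p q : ℝ} (hα : α ≠ 0) (hpq : p ≠ 0 → q ≠ 0) :
    p * log (α * p / q) = p * log α + p * log (p / q) := by
  rcases eq_or_ne p 0 with rfl | hp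
  · simp
  rw [mul_div_assoc, log_mul hα (div_ne_zero hp (hpq hp)), mul_add]

theorem mul_mul_div_eq {α p q : ℝ} (hpq : p ≠ 0 → q ≠ 0) : q * (α * p / q) = α * p := by
  rcases eq_or_ne q 0 with rfl | hq
  · simp [not_imp_not.mp hpq rfl]
  exact mul_div_cancel₀ _ hq

theorem mul_log_sub_mul_div_le {α p q D : ℝ} (hα : 0 < α) (hp : 0 ≤ p) (hq : 0 ≤ q)
    (hpq : 0 < p → 0 < q) (hD : 0 < D) :
    p * log D - q * D / α ≤ p * log α + p * log (p / q) - p := by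
  have h := mul_log_sub_mul_le hp (div_nonneg hq hα.le) (fun h => div_pos (hpq h) hα) hD
  rwa [div_div_eq_mul_div, mul_comm p α, div_mul_eq_mul_div,
    mul_log_mul_div_eq hα.ne' fun hp0 hq0 => (hpq (hp.lt_of_ne' hp0)).ne' hq0] at h

theorem dDIME_lower_bound_general {X : Type*} [MeasurableSpace X] (μ : Measure X)
    (p q : X → ℝ) (α : ℝ) (hα : 0 < α)
    (hp : ∀ x, 0 ≤ p x) (hq : ∀ x, 0 ≤ q x)
    (hpq : ∀ x, 0 < p x → 0 < q x)
    (hp1 : ∫ x, p x ∂μ = 1)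
    (hint1 : Integrable (fun x => p x * Real.log (p x / q x)) μ) :
    (∀ D : X → ℝ, Measurable D → (∀ x, 0 < D x) →
      Integrable (fun x => p x * Real.log (D x)) μ →
      Integrable (fun x => q x * D x) μ →
      (α * (∫ x, p x * Real.log (D x) ∂μ) - (∫ x, q x * D x ∂μ)) / α + 1 - Real.log α ≤
        ∫ x, p x * Real.log (p x / q x) ∂μ) ∧
    (Integrable (fun x => p x * Real.log (α * p x / q x)) μ →
      Integrable (fun x => q x * (α * p x / q x)) μ →
      (α * (∫ x, p x * Real.log (α * p x / q x) ∂μ) -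
          (∫ x, q x * (α * p x / q x) ∂μ)) / α + 1 - Real.log α =
        ∫ x, p x * Real.log (p x / q x) ∂μ) := by
  have hip : Integrable p μ := Integrable.of_integral_ne_zero (by simp [hp1])
  have hpq' : ∀ x, p x ≠ 0 → q x ≠ 0 := fun x h => (hpq x ((hp x).lt_of_ne' h)).ne'
  refine ⟨fun D _ hD hintA hintB => ?_, fun _ _ => ?_⟩
  · have hR : Integrable (fun x => p x * log α + p x * log (p x / q x)) μ :=
      (hip.mul_const _).add hint1
    have hmono : ∫ x, (p x * log (D x) - q x * D x / α) ∂μ ≤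
        ∫ x, (p x * log α + p x * log (p x / q x) - p x) ∂μ :=
      integral_mono (hintA.sub (hintB.div_const α)) (hR.sub hip) fun x => mul_log_sub_mul_div_le hα (hp x) (hq x) (hpq x) (hD x)
    rw [integral_sub hintA (hintB.div_const α), integral_div,
      integral_sub hR hip, integral_add (hip.mul_const _) hint1,
      integral_mul_const, hp1] at hmono
    rw [sub_div, mul_div_cancel_left₀ _ hα.ne']
    linarith
  · have hlog : ∫ x, p x * log (α * p x / q x) ∂μ = log α + ∫ x, p x * log (p x / q x) ∂μ := by
      rw [integral_congr_ae (ae_of_all _ fun x => mul_log_mul_div_eq hα.ne' (hpq' x)),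
        integral_add (hip.mul_const _) hint1, integral_mul_const, hp1, one_mul]
    rw [hlog, integral_congr_ae (ae_of_all _ fun x => mul_mul_div_eq (hpq' x)),
      integral_const_mul, hp1]
    field_simp
    ring

/-- d-DIME variational lower bound: `D_KL(p‖q) ≥ J_α(D)/α + 1 - log α`, with equality
for `D*(x) = α p x / q x`. -/
theorem dDIME_lower_bound {X : Type*} [MeasurableSpace X] (μ : Measure X)
    (p q : X → ℝ) (α : ℝ) (hα : 0 < α)
    (hmp : Measurable p) (hmq : Measurable q)
    (hp : ∀ x, 0 ≤ p x) (hq : ∀ x, 0 ≤ q x)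
    (hpq : ∀ x, 0 < p x → 0 < q x)
    (hp1 : ∫ x, p x ∂μ = 1) (hq1 : ∫ x, q x ∂μ = 1)
    (hint1 : Integrable (fun x => p x * Real.log (p x / q x)) μ) :
    (∀ D : X → ℝ, Measurable D → (∀ x, 0 < D x) →
      Integrable (fun x => p x * Real.log (D x)) μ →
      Integrable (fun x => q x * D x) μ →
      (α * (∫ x, p x * Real.log (D x) ∂μ) - (∫ x, q x * D x ∂μ)) / α + 1 - Real.log α ≤
        ∫ x, p x * Real.log (p x / q x) ∂μ) ∧
    (Integrable (fun x => p x * Real.log (α * p x / q x)) μ →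
      Integrable (fun x => q x * (α * p x / q x)) μ →
      (α * (∫ x, p x * Real.log (α * p x / q x) ∂μ) -
          (∫ x, q x * (α * p x / q x) ∂μ)) / α + 1 - Real.log α =
        ∫ x, p x * Real.log (p x / q x) ∂μ) :=
  dDIME_lower_bound_general μ p q α hα hp hq hpq hp1 hint1
end
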